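/- Fix n : ℕ with n ≥ 1 and j : Fin n. Write s₁ : Fin (n+1) → Fin n for the codegeneracy with pivot j, s₂ : Fin (n+2) → Fin (n+1) for the codegeneracy whose pivot has value (j : ℕ), and s₃ : Fin (n+2) → Fin (n+1) for the codegeneracy whose pivot has value (j : ℕ) + 1; write d_⊤ : Fin m → Fin (m+1) for x ↦ (x : ℕ) and d_⊥ : Fin m → Fin (m+1) for x ↦ (x : ℕ) + 1. Then: (i) s₂ ∘ d_⊤ = d_⊤ ∘ s₁, and for every c : ℕ and monotone u : Fin c → Fin (n+2), v : Fin c → Fin n with s₂ ∘ u = d_⊤ ∘ v there exists a unique monotone w : Fin c → Fin (n+1) with d_⊤ ∘ w = u and s₁ ∘ w = v; (ii) s₃ ∘ d_⊥ = d_⊥ ∘ s₁, and for every c : ℕ and monotone u : Fin c → Fin (n+2), v : Fin c → Fin n with s₃ ∘ u = d_⊥ ∘ v there exists a unique monotone w : Fin c → Fin (n+1) with d_⊥ ∘ w = u and s₁ ∘ w = v. (The squares of a codegeneracy against each outer coface are pullbacks in the category of finite ordinals.) -/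

import Mathlib

/-- The codegeneracy map `s^k : Fin (m+2) → Fin (m+1)` with pivot `k : Fin (m+1)`. -/
def codeg {m : ℕ} (k : Fin (m + 1)) (y : Fin (m + 2)) : Fin (m + 1) :=
  if h : (y : ℕ) ≤ (k : ℕ) then ⟨(y : ℕ), by have := k.isLt; omega⟩
  else ⟨(y : ℕ) - 1, by have := y.isLt; omega⟩

/-- The top outer coface `d_⊤ : Fin m → Fin (m+1)`, `x ↦ x`. -/
def dTop {m : ℕ} (x : Fin m) : Fin (m + 1) :=
  ⟨(x : ℕ), by have := x.isLt; omega⟩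

/-- The bottom outer coface `d_⊥ : Fin m → Fin (m+1)`, `x ↦ x + 1`. -/
def dBot {m : ℕ} (x : Fin m) : Fin (m + 1) :=
  ⟨(x : ℕ) + 1, by have := x.isLt; omega⟩

/-!
Both outer cofaces are order embeddings, and `codeg` is `Fin.predAbove`, which commutes
with `Fin.castSucc` and `Fin.succ`; this gives the two squares. A commuting square whose
vertical sides `d`, `d'` are injective, with `d` an order embedding, is a pullback of monotone
maps as soon as every `u` with `s' ∘ u = d' ∘ v` takes values in the range of `d`: the
lift is `d⁻¹ ∘ u`. The range condition holds because `codeg` sends the last point to the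
last point, which is not in the range of `d_⊤`, and `0` to `0`, which is not in the range
of `d_⊥`.
-/

open Function

theorem StrictMono.existsUnique_monotone_lift {α β γ δ ι : Type*}
    [LinearOrder α] [Preorder β] [Preorder ι] {d : α → β} (hd : StrictMono d)
    {d' : γ → δ} (hd' : Injective d')
    {s : α → γ} {s' : β → δ} (hsq : s' ∘ d = d' ∘ s) {u : ι → β} {v : ι → γ}
    (hu : Monotone u) (huv : s' ∘ u = d' ∘ v) (hrange : ∀ i, u i ∈ Set.range d) :
    ∃! w : ι → α, Monotone w ∧ d ∘ w = u ∧ s ∘ w = v := by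
  choose w hw using hrange
  have hdw : d ∘ w = u := funext hw
  refine ⟨w, ⟨fun a b hab => ?_, hdw, funext fun i => hd' ?_⟩, ?_⟩
  · rw [← hd.le_iff_le, hw, hw]
    exact hu hab
  · calc d' (s (w i)) = s' (d (w i)) := (congrFun hsq (w i)).symm
      _ = d' (v i) := by rw [hw]; exact congrFun huv i
  · rintro w' ⟨-, hdw', -⟩
    exact hd.injective.comp_left (hdw'.trans hdw.symm)

variable {m : ℕ}

theorem codeg_eq_predAbove (k : Fin (m + 1)) : codeg k = k.predAbove := by
  funext y
  ext
  unfold codeg Fin.predAbove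
  split_ifs with h₁ h₂ h₂ <;> simp only [Fin.lt_def, Fin.val_castSucc] at h₂ <;> simp <;>
    omega

theorem dTop_eq_castSucc : (dTop : Fin m → Fin (m + 1)) = Fin.castSucc := rfl

theorem dBot_eq_succ : (dBot : Fin m → Fin (m + 1)) = Fin.succ := rfl

theorem strictMono_dTop : StrictMono (dTop : Fin m → Fin (m + 1)) := Fin.strictMono_castSucc

theorem strictMono_dBot : StrictMono (dBot : Fin m → Fin (m + 1)) := Fin.strictMono_succ

theorem codeg_castSucc_comp_dTop (k : Fin (m + 1)) :
    codeg k.castSucc ∘ dTop = dTop ∘ codeg k := by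
  simp only [codeg_eq_predAbove, dTop_eq_castSucc]
  funext y
  exact Fin.castSucc_predAbove_castSucc k y

theorem codeg_succ_comp_dBot (k : Fin (m + 1)) :
    codeg k.succ ∘ dBot = dBot ∘ codeg k := by
  simp only [codeg_eq_predAbove, dBot_eq_succ]
  funext y
  exact Fin.succ_predAbove_succ k y

theorem mem_range_dTop_of_codeg_eq_dTop {k : Fin (m + 1)} {y : Fin (m + 2)} {x : Fin m}
    (h : codeg k y = dTop x) : y ∈ Set.range dTop := by
  rw [dTop_eq_castSucc, Set.mem_range, Fin.exists_castSucc_eq]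
  rintro rfl
  rw [codeg_eq_predAbove, Fin.predAbove_right_last, dTop_eq_castSucc] at h
  exact Fin.castSucc_ne_last x h.symm

theorem mem_range_dBot_of_codeg_eq_dBot {k : Fin (m + 1)} {y : Fin (m + 2)} {x : Fin m}
    (h : codeg k y = dBot x) : y ∈ Set.range dBot := by
  rw [dBot_eq_succ, Set.mem_range, Fin.exists_succ_eq]
  rintro rfl
  rw [codeg_eq_predAbove, Fin.predAbove_right_zero, dBot_eq_succ] at h
  exact Fin.succ_ne_zero x h.symm

/-- The `n` of the informal statement, required to satisfy `n ≥ 1`, is written `n + 1` here. -/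
theorem codeg_outer_coface_pullbacks (n : ℕ) (j : Fin (n + 1)) :
    ((codeg (⟨(j : ℕ), by have := j.isLt; omega⟩ : Fin (n + 2))) ∘
        (dTop : Fin (n + 2) → Fin (n + 3)) = dTop ∘ (codeg j)) ∧
    (∀ (c : ℕ) (u : Fin c → Fin (n + 3)) (v : Fin c → Fin (n + 1)),
      Monotone u → Monotone v →
      (codeg (⟨(j : ℕ), by have := j.isLt; omega⟩ : Fin (n + 2))) ∘ u = dTop ∘ v →
      ∃! w : Fin c → Fin (n + 2), Monotone w ∧ dTop ∘ w = u ∧ (codeg j) ∘ w = v) ∧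
    ((codeg (⟨(j : ℕ) + 1, by have := j.isLt; omega⟩ : Fin (n + 2))) ∘
        (dBot : Fin (n + 2) → Fin (n + 3)) = dBot ∘ (codeg j)) ∧
    (∀ (c : ℕ) (u : Fin c → Fin (n + 3)) (v : Fin c → Fin (n + 1)),
      Monotone u → Monotone v →
      (codeg (⟨(j : ℕ) + 1, by have := j.isLt; omega⟩ : Fin (n + 2))) ∘ u = dBot ∘ v →
      ∃! w : Fin c → Fin (n + 2), Monotone w ∧ dBot ∘ w = u ∧ (codeg j) ∘ w = v) := by
  refine ⟨codeg_castSucc_comp_dTop j, fun c u v hu _ huv => ?_,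
    codeg_succ_comp_dBot j, fun c u v hu _ huv => ?_⟩
  · exact strictMono_dTop.existsUnique_monotone_lift strictMono_dTop.injective
      (codeg_castSucc_comp_dTop j) hu huv fun i => mem_range_dTop_of_codeg_eq_dTop (congrFun huv i)
  · exact strictMono_dBot.existsUnique_monotone_lift strictMono_dBot.injective
      (codeg_succ_comp_dBot j) hu huv fun i => mem_range_dBot_of_codeg_eq_dBot (congrFun huv i)
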